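/- Define a_n = 0 unless n is a power of 2, a_1 = 1, and a_{2^k} = −1 for k ≥ 1. Then Tf(x) = f(x) − f(2x) − f(4x) − f(8x) − ⋯ satisfies ‖Tf‖² = 2‖f‖² for all f ∈ L²[0,∞). -/

import Mathlib

open MeasureTheory Set
open scoped ENNReal

noncomputable def ν : Measure ℝ := volume.restrict (Set.Ioi (0:ℝ))

/-- `T(a)f(x) = ∑_{n≥1} a_n f(n x)`. -/
noncomputable def Tfun (a : ℕ → ℂ) (f : ℝ → ℂ) : ℝ → ℂ :=
  fun x => ∑' n : ℕ, a (n + 1) * f ((n + 1) * x)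

/-- The sequence with `a 1 = 1`, `a (2^k) = -1` for `k ≥ 1`, `a n = 0` otherwise. -/
noncomputable def aSeq8 : ℕ → ℂ := fun n =>
  if n = 1 then 1 else if n = 2 ^ Nat.log 2 n then (-1 : ℂ) else 0

/-!
Let `D f (x) = f (2 x)` and `w = ∑_{k ≥ 0} D^k f`, a finite sum at every point when `f` has
compact support in `(0, ∞)`; it lies in `L²` because `w = 2 f - T f`. Then `f = w - D w` and `T f = w - 2 D w`, while
`‖D w‖² = ‖w‖² / 2` by the substitution `x ↦ 2 x`. By the parallelogram law, for any two vectors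
with `‖w‖² = 2 ‖v‖²` one has `‖w - 2 v‖² = 2 ‖w - v‖²`; applied to `v = D w` this is
`‖T f‖² = 2 ‖f‖²`. Such `f` are dense in `L²(0, ∞)`, and both sides are continuous in `f`.
-/

theorem norm_sub_sq_eq_two_mul_of_norm_add_sq (𝕜 : Type*) {E : Type*} [RCLike 𝕜]
    [NormedAddCommGroup E] [InnerProductSpace 𝕜 E] {x y : E}
    (h : ‖x + y‖ ^ 2 = 2 * ‖y‖ ^ 2) : ‖x - y‖ ^ 2 = 2 * ‖x‖ ^ 2 := by
  linarith [parallelogram_law_with_norm 𝕜 x y]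

namespace MeasureTheory

variable {α E : Type*} [TopologicalSpace α] [T2Space α] [NormalSpace α] [LocallyCompactSpace α]
  [MeasurableSpace α] [BorelSpace α] [NormedAddCommGroup E] [NormedSpace ℝ E]
  {μ : Measure α} [μ.Regular] {p : ℝ≥0∞} {U : Set α}

theorem MemLp.exists_tsupport_subset_eLpNorm_sub_le (hU : IsOpen U) (hp : p ≠ ∞) {f : α → E}
    (hf : MemLp f p (μ.restrict U)) {ε : ℝ≥0∞} (hε : ε ≠ 0) :
    ∃ g : α → E, eLpNorm (f - g) p (μ.restrict U) ≤ ε ∧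
      Continuous g ∧ HasCompactSupport g ∧ tsupport g ⊆ U ∧ MemLp g p (μ.restrict U) := by
  refine hf.induction_dense hp _ ?_ ?_ (fun g hg => hg.2.2.2.aestronglyMeasurable) hε
  · intro c t ht htμ η hη
    obtain ⟨δ, hδ, hδη⟩ := exists_Lp_half E (μ.restrict U) p hη
    obtain ⟨θ, hθ, hθδ⟩ := exists_eLpNorm_indicator_le (μ := μ.restrict U) hp c hδ.ne'
    obtain ⟨s, hst, hs, hs_closed, hsθ⟩ :=
      (ht.inter hU.measurableSet).exists_isCompact_isClosed_sdiff_lt (μ := μ.restrict U)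
        ((measure_mono inter_subset_left).trans_lt htμ).ne (ENNReal.coe_pos.2 hθ).ne'
    obtain ⟨k, hk, hsk, hkU⟩ := exists_compact_between hs hU (hst.trans inter_subset_right)
    obtain ⟨g, hg, hgs, -, hg_supp, hg_mem⟩ := exists_continuous_eLpNorm_sub_le_of_closed hp
      hs_closed isOpen_interior hsk (hs.measure_lt_top (μ := μ)).ne c hδ.ne'
    have hts : eLpNorm (s.indicator (fun _ => c) - t.indicator fun _ => c) p (μ.restrict U)
        ≤ δ := by
      rw [← eLpNorm_neg, neg_sub, ← indicator_sdiff (hst.trans inter_subset_left)]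
      refine hθδ _ (le_of_eq_of_le ?_ hsθ.le)
      rw [Measure.restrict_apply' hU.measurableSet, Measure.restrict_apply' hU.measurableSet,
        inter_sdiff_right_comm, inter_assoc, inter_self]
    refine ⟨g, ?_, hg, HasCompactSupport.intro hk fun x hx => ?_, ?_, hg_mem.restrict U⟩
    · have hgs' : eLpNorm (g - s.indicator fun _ => c) p (μ.restrict U) ≤ δ :=
        (eLpNorm_mono_measure _ Measure.restrict_le_self).trans hgs
      have hmeas : AEStronglyMeasurable (s.indicator fun _ => c) (μ.restrict U) :=
        aestronglyMeasurable_const.indicator hs_closed.measurableSet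
      simpa using (hδη _ _ ((hg_mem.restrict U).1.sub hmeas)
        (hmeas.sub (aestronglyMeasurable_const.indicator ht)) hgs' hts).le
    · exact Function.notMem_support.mp fun hgx => hx (interior_subset (hg_supp hgx))
    · exact (closure_minimal (hg_supp.trans interior_subset) hk.isClosed).trans hkU
  · rintro f g ⟨hf, hfc, hfU, hfm⟩ ⟨hg, hgc, hgU, hgm⟩
    exact ⟨hf.add hg, hfc.add hgc, (tsupport_add f g).trans (union_subset hfU hgU), hfm.add hgm⟩

theorem Lp.dense_setOf_tsupport_subset [Fact (1 ≤ p)] (hU : IsOpen U) (hp : p ≠ ∞) :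
    Dense {u : Lp E p (μ.restrict U) | ∃ g : α → E, Continuous g ∧ HasCompactSupport g ∧
      tsupport g ⊆ U ∧ ∃ hg : MemLp g p (μ.restrict U), u = hg.toLp g} := by
  refine Metric.dense_iff.2 fun u r hr => ?_
  obtain ⟨g, hug, hg, hgc, hgU, hgm⟩ := (Lp.memLp u).exists_tsupport_subset_eLpNorm_sub_le hU hp
    (ENNReal.ofReal_pos.2 (half_pos hr)).ne'
  refine ⟨hgm.toLp g, ?_, g, hg, hgc, hgU, hgm, rfl⟩
  rw [Metric.mem_ball, dist_comm, Lp.dist_def,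
    eLpNorm_congr_ae ((ae_eq_refl _).sub hgm.coeFn_toLp)]
  calc (eLpNorm (⇑u - g) p (μ.restrict U)).toReal ≤ r / 2 :=
        ENNReal.toReal_le_of_le_ofReal (half_pos hr).le hug
    _ < r := half_lt_self hr

end MeasureTheory

section Dilation

variable {E : Type*} [NormedAddCommGroup E] {c : ℝ}

theorem map_const_mul_ν (hc : 0 < c) : ν.map (c * ·) = ENNReal.ofReal c⁻¹ • ν := by
  have hpre : (c * ·) ⁻¹' Ioi 0 = Ioi 0 := by
    ext x
    simp [mul_pos_iff_of_pos_left hc]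
  rw [ν, ← hpre, ← (measurableEmbedding_mulLeft₀ hc.ne').restrict_map, hpre,
    Real.map_volume_mul_left hc.ne', Measure.restrict_smul, abs_of_pos (inv_pos.2 hc)]

theorem eLpNorm_comp_const_mul_ν {p : ℝ≥0∞} (hp : p ≠ ∞) (hc : 0 < c) (φ : ℝ → E) :
    eLpNorm (fun x => φ (c * x)) p ν = ENNReal.ofReal c⁻¹ ^ (1 / p).toReal * eLpNorm φ p ν := by
  rw [← smul_eq_mul, ← eLpNorm_smul_measure_of_ne_top hp, ← map_const_mul_ν hc,
    (measurableEmbedding_mulLeft₀ hc.ne').eLpNorm_map_measure]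
  rfl

theorem mul_norm_toLp_sq_of_eq_comp_const_mul {φ ψ : ℝ → E} (hφ : MemLp φ 2 ν)
    (hψ : MemLp ψ 2 ν) (hc : 0 < c) (h : ∀ x, ψ x = φ (c * x)) :
    c * ‖hψ.toLp ψ‖ ^ 2 = ‖hφ.toLp φ‖ ^ 2 := by
  rw [Lp.norm_toLp, Lp.norm_toLp, funext h, eLpNorm_comp_const_mul_ν (by simp) hc,
    ENNReal.toReal_mul, ← ENNReal.toReal_rpow, ENNReal.toReal_ofReal (inv_pos.2 hc).le, mul_pow,
    ← Real.rpow_natCast, ← Real.rpow_mul (inv_pos.2 hc).le]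
  have h2 : (1 / (2 : ℝ≥0∞)).toReal * (2 : ℕ) = 1 := by norm_num
  rw [h2, Real.rpow_one, ← mul_assoc, mul_inv_cancel₀ hc.ne', one_mul]

end Dilation

section Dyadic

variable {E : Type*} [NormedAddCommGroup E]

noncomputable def dyadicSum (f : ℝ → E) (x : ℝ) : E := ∑' k : ℕ, f (2 ^ k * x)

theorem summable_comp_two_pow_mul {f : ℝ → E} (hpos : Function.support f ⊆ Ioi 0)
    (hbdd : BddAbove (Function.support f)) (x : ℝ) : Summable fun k : ℕ => f (2 ^ k * x) := by
  rcases le_or_gt x 0 with hx | hx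
  · refine summable_of_ne_finset_zero (s := ∅) fun k _ => Function.notMem_support.mp fun hk => ?_
    exact (hpos hk).not_ge (mul_nonpos_of_nonneg_of_nonpos (by positivity) hx)
  · obtain ⟨R, hR⟩ := hbdd
    obtain ⟨N, hN⟩ := pow_unbounded_of_one_lt (R / x) one_lt_two
    refine summable_of_ne_finset_zero (s := Finset.range N) fun k hk =>
      Function.notMem_support.mp fun hk' => ?_
    have hNk : (2 : ℝ) ^ N ≤ 2 ^ k := pow_le_pow_right₀ one_le_two (by simpa using hk)
    rw [div_lt_iff₀ hx] at hN
    nlinarith [hR hk']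

theorem dyadicSum_eq_add {f : ℝ → E} {x : ℝ} (hs : Summable fun k : ℕ => f (2 ^ k * x)) :
    dyadicSum f x = f x + dyadicSum f (2 * x) := by
  rw [dyadicSum, hs.tsum_eq_zero_add, pow_zero, one_mul, dyadicSum]
  simp only [pow_succ, mul_assoc, mul_comm (2 : ℝ)]

end Dyadic

theorem aSeq8_ne_zero {n : ℕ} (h : aSeq8 n ≠ 0) : n = 2 ^ Nat.log 2 n := by
  unfold aSeq8 at h
  split_ifs at h with h1 h2
  · simp [h1]
  · exact h2
  · exact absurd rfl h

theorem aSeq8_two_pow (k : ℕ) : aSeq8 (2 ^ k) = if k = 0 then 1 else -1 := by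
  rcases k with _ | k <;> simp [aSeq8]

theorem Tfun_aSeq8_eq_tsum (f : ℝ → ℂ) (x : ℝ) :
    Tfun aSeq8 f x = ∑' k : ℕ, aSeq8 (2 ^ k) * f (2 ^ k * x) := by
  have hinj : Function.Injective fun k : ℕ => 2 ^ k - 1 := fun a b hab => by
    have := Nat.one_le_two_pow (n := a)
    have := Nat.one_le_two_pow (n := b)
    exact Nat.pow_right_injective le_rfl (by dsimp only at hab ⊢; omega)
  rw [Tfun, ← hinj.tsum_eq]
  · refine tsum_congr fun k => ?_
    have hk : 2 ^ k - 1 + 1 = 2 ^ k := Nat.sub_add_cancel Nat.one_le_two_pow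
    rw [← Nat.cast_add_one, hk, Nat.cast_pow, Nat.cast_ofNat]
  · intro n hn
    exact ⟨Nat.log 2 (n + 1), by have := aSeq8_ne_zero (left_ne_zero_of_mul hn); dsimp only; omega⟩

theorem Tfun_aSeq8_eq {f : ℝ → ℂ} {x : ℝ} (hs : Summable fun k : ℕ => f (2 ^ k * x)) :
    Tfun aSeq8 f x = 2 * f x - dyadicSum f x := by
  have hsa : Summable fun k : ℕ => aSeq8 (2 ^ k) * f (2 ^ k * x) :=
    hs.norm.of_norm_bounded fun k => by rw [norm_mul, aSeq8_two_pow]; split_ifs <;> simp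
  rw [Tfun_aSeq8_eq_tsum, hsa.tsum_eq_zero_add, dyadicSum, hs.tsum_eq_zero_add, aSeq8_two_pow 0]
  simp only [aSeq8_two_pow, Nat.succ_ne_zero, if_false, if_true, neg_one_mul, tsum_neg, pow_zero,
    one_mul]
  ring

theorem norm_toLp_Tfun_aSeq8_sq {f : ℝ → ℂ} (hf : MemLp f 2 ν) (hTf : MemLp (Tfun aSeq8 f) 2 ν)
    (hs : ∀ x, Summable fun k : ℕ => f (2 ^ k * x)) :
    ‖hTf.toLp _‖ ^ 2 = 2 * ‖hf.toLp f‖ ^ 2 := by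
  have hD := hf.sub hTf
  have hw := hf.add hD
  have hdil := mul_norm_toLp_sq_of_eq_comp_const_mul hw hD two_pos fun x => by
    simp only [Pi.add_apply, Pi.sub_apply]
    rw [Tfun_aSeq8_eq (hs x), Tfun_aSeq8_eq (hs (2 * x)), dyadicSum_eq_add (hs x)]
    ring
  rw [MemLp.toLp_add hf hD, MemLp.toLp_sub hf hTf] at hdil
  have := norm_sub_sq_eq_two_mul_of_norm_add_sq ℂ hdil.symm
  rwa [sub_sub_cancel] at this

theorem stmt8 (T : Lp ℂ 2 ν →L[ℂ] Lp ℂ 2 ν)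
    (hT : ∀ (f : ℝ → ℂ) (hf : MemLp f 2 ν),
      Continuous f → HasCompactSupport f → tsupport f ⊆ Set.Ioi 0 →
      ∃ h2 : MemLp (Tfun aSeq8 f) 2 ν, T (hf.toLp f) = h2.toLp (Tfun aSeq8 f)) :
    ∀ u : Lp ℂ 2 ν, ‖T u‖ ^ 2 = 2 * ‖u‖ ^ 2 := by
  have hdense : Dense {u : Lp ℂ 2 ν | ∃ g : ℝ → ℂ, Continuous g ∧ HasCompactSupport g ∧
      tsupport g ⊆ Ioi 0 ∧ ∃ hg : MemLp g 2 ν, u = hg.toLp g} :=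
    Lp.dense_setOf_tsupport_subset isOpen_Ioi (by simp)
  refine hdense.induction ?_ (isClosed_eq (by fun_prop) (by fun_prop))
  rintro _ ⟨f, hfc, hfs, hf0, hf, rfl⟩
  obtain ⟨hTf, hTeq⟩ := hT f hf hfc hfs hf0
  rw [hTeq]
  exact norm_toLp_Tfun_aSeq8_sq hf hTf <| summable_comp_two_pow_mul
    ((subset_tsupport f).trans hf0) (hfs.isCompact.bddAbove.mono (subset_tsupport f))
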